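/- arXiv:2510.17994 — 4 statements merged into one kernel-verified Lean document; each statement's English description precedes it below -/
import Mathlib

section
/- For a real-valued random variable X with mid distribution function F̄ defined by F̄(x) = P(X < x) + (1/2) P(X = x), the expectation of the grade satisfies E[F̄(X)] = 1/2. -/
open MeasureTheory ProbabilityTheory

noncomputable section

variable {Ω : Type*} [MeasurableSpace Ω]

/-- Mid distribution function of `X` under `μ`: `F̄(x) = P(X < x) + (1/2) P(X = x)`. -/
def mdf (μ : Measure Ω) (X : Ω → ℝ) (x : ℝ) : ℝ :=
  (μ {ω | X ω < x}).toReal + (1 / 2) * (μ {ω | X ω = x}).toReal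

/-- Covariance of two real random variables under `μ`. -/
def covar (μ : Measure Ω) (f g : Ω → ℝ) : ℝ :=
  (∫ ω, f ω * g ω ∂μ) - (∫ ω, f ω ∂μ) * (∫ ω, g ω ∂μ)

/-- Similarity function `s(a,b) = 1{a < b} + (1/2) 1{a = b}`. -/
def simFun (a b : ℝ) : ℝ :=
  (if a < b then 1 else 0) + (1 / 2) * (if a = b then 1 else 0)

/-- Granularity `γ(X) = P(X = X' = X'')` for i.i.d. copies of `X`. -/
def gran (μ : Measure Ω) (X : Ω → ℝ) : ℝ :=
  ((μ.prod (μ.prod μ)) {ω | X ω.1 = X ω.2.1 ∧ X ω.2.1 = X ω.2.2}).toReal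

/-- Asymmetric grade correlation `AGC(U,V) = Cov(F̄_U(U), Ḡ_V(V)) / Var(Ḡ_V(V))`. -/
def agc (μ : Measure Ω) (U V : Ω → ℝ) : ℝ :=
  covar μ (fun ω => mdf μ U (U ω)) (fun ω => mdf μ V (V ω)) /
    covar μ (fun ω => mdf μ V (V ω)) (fun ω => mdf μ V (V ω))

/-- Coefficient of monotone association `CMA(U,V) = (AGC(U,V) + 1) / 2`. -/
def cma (μ : Measure Ω) (U V : Ω → ℝ) : ℝ := (agc μ U V + 1) / 2

/-- `X` is not almost surely constant. -/
def Nondeg (μ : Measure Ω) (X : Ω → ℝ) : Prop := ¬ ∃ c : ℝ, X =ᵐ[μ] fun _ => c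

/-- Pearson correlation. -/
def pcor (μ : Measure Ω) (f g : Ω → ℝ) : ℝ :=
  covar μ f g / (Real.sqrt (covar μ f f) * Real.sqrt (covar μ g g))

/-- Quantile function (generalized inverse of the CDF). -/
def qf (μ : Measure Ω) (Y : Ω → ℝ) (α : ℝ) : ℝ :=
  sInf {y : ℝ | α ≤ (μ {ω | Y ω ≤ y}).toReal}

theorem MeasureTheory.Measure.integral_measureReal_prodMk_left {α β : Type*}
    [MeasurableSpace α] [MeasurableSpace β] {μ : Measure α} {ν : Measure β} [SFinite ν]
    {s : Set (α × β)} (hs : MeasurableSet s) (h2s : μ.prod ν s ≠ ⊤) :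
    ∫ x, ν.real (Prod.mk x ⁻¹' s) ∂μ = (μ.prod ν).real s := by
  simp_rw [measureReal_def]
  rw [integral_toReal (measurable_measure_prodMk_left hs).aemeasurable
    (Measure.ae_measure_lt_top hs h2s), Measure.prod_apply hs]

theorem mdf_eq_average (μ : Measure Ω) [IsFiniteMeasure μ] {X : Ω → ℝ} (hX : Measurable X)
    (x : ℝ) : mdf μ X x = (μ.real {ω | X ω < x} + μ.real {ω | X ω ≤ x}) / 2 := by
  have hle : {ω | X ω ≤ x} = {ω | X ω < x} ∪ {ω | X ω = x} := by
    ext ω; simp [le_iff_lt_or_eq]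
  have hdisj : Disjoint {ω | X ω < x} {ω | X ω = x} :=
    Set.disjoint_left.2 fun _ hlt heq => hlt.ne heq
  rw [mdf, hle, measureReal_union hdisj (measurableSet_eq_fun hX measurable_const)]
  simp only [measureReal_def]
  ring

/-- Under `μ.prod μ`, `X ∘ Prod.fst` and `X' := X ∘ Prod.snd` are independent copies of `X`,
so this reads `E[F̄(X)] = (P(X' < X) + P(X' ≤ X)) / 2`. -/
theorem integral_mdf_eq_prod_average (μ : Measure Ω) [IsFiniteMeasure μ] {X : Ω → ℝ}
    (hX : Measurable X) :
    ∫ ω, mdf μ X (X ω) ∂μ =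
      ((μ.prod μ).real {p | X p.2 < X p.1} + (μ.prod μ).real {p | X p.2 ≤ X p.1}) / 2 := by
  have hlt : MeasurableSet {p : Ω × Ω | X p.2 < X p.1} :=
    measurableSet_lt (by fun_prop) (by fun_prop)
  have hle : MeasurableSet {p : Ω × Ω | X p.2 ≤ X p.1} :=
    measurableSet_le (by fun_prop) (by fun_prop)
  simp_rw [mdf_eq_average μ hX]
  rw [← Measure.integral_measureReal_prodMk_left hlt (by finiteness),
    ← Measure.integral_measureReal_prodMk_left hle (by finiteness),
    ← integral_add (Measure.integrable_measure_prodMk_left hlt (by finiteness))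
      (Measure.integrable_measure_prodMk_left hle (by finiteness)), integral_div]
  rfl

/-- `E[F̄(X)] = 1/2`. -/
theorem stmt_0 (μ : Measure Ω) [IsProbabilityMeasure μ] (X : Ω → ℝ) (hX : Measurable X) :
    (∫ ω, mdf μ X (X ω) ∂μ) = 1 / 2 := by
  have hlt : MeasurableSet {p : Ω × Ω | X p.1 < X p.2} :=
    measurableSet_lt (by fun_prop) (by fun_prop)
  -- `{X' ≤ X}` is the complement of `{X < X'}`, and swapping the copies turns `{X < X'}` into
  -- `{X' < X}`; so the two probabilities in `integral_mdf_eq_prod_average` add up to one.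
  have hle_compl :
      (μ.prod μ).real {p | X p.2 ≤ X p.1} = 1 - (μ.prod μ).real {p | X p.1 < X p.2} := by
    rw [← probReal_compl_eq_one_sub hlt]
    congr 1
    ext p
    simp
  have hlt_swap :
      (μ.prod μ).real {p | X p.1 < X p.2} = (μ.prod μ).real {p | X p.2 < X p.1} :=
    (Measure.measurePreserving_swap.measureReal_preimage hlt.nullMeasurableSet).symm
  rw [integral_mdf_eq_prod_average μ hX, hle_compl, hlt_swap]
  ring

end
end

section
/- For a real-valued random variable Y with MDF Ḡ and independent copies Y', Y'', the identity E[(Ḡ(Y'') − Ḡ(Y')) 1{Y' < Y''}] = 2 E[Ḡ(Y)²] − 1/2 holds. -/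
open MeasureTheory ProbabilityTheory

noncomputable section

variable {Ω : Type*} [MeasurableSpace Ω]

section Aux

lemma measurable_simFun2 : Measurable (fun q : ℝ × ℝ => simFun q.1 q.2) := by
  unfold simFun
  refine Measurable.add ?_ (Measurable.const_mul ?_ _)
  · exact measurable_const.ite (measurableSet_lt measurable_fst measurable_snd)
      measurable_const
  · exact measurable_const.ite (measurableSet_eq_fun measurable_fst measurable_snd)
      measurable_const

lemma simFun_nonneg (a b : ℝ) : 0 ≤ simFun a b := by
  unfold simFun; positivity

lemma simFun_le_two (a b : ℝ) : simFun a b ≤ 2 := by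
  unfold simFun
  rcases lt_trichotomy a b with h | h | h <;>
    simp [h, ne_of_lt, ne_of_gt, not_lt_of_gt] <;> norm_num

lemma abs_simFun_le (a b : ℝ) : |simFun a b| ≤ 2 := by
  rw [abs_le]
  exact ⟨by linarith [simFun_nonneg a b], simFun_le_two a b⟩

lemma simFun_add_swap (a b : ℝ) : simFun a b + simFun b a = 1 := by
  unfold simFun
  rcases lt_trichotomy a b with h | h | h
  · simp [h, not_lt_of_gt h, ne_of_lt h, (ne_of_lt h).symm]
  · simp [h]; norm_num
  · simp [h, not_lt_of_gt h, ne_of_gt h, (ne_of_gt h).symm]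

variable (μ : Measure Ω) [IsProbabilityMeasure μ] (Y : Ω → ℝ)

lemma toReal_meas_le_one (s : Set Ω) : (μ s).toReal ≤ 1 := by
  simpa using ENNReal.toReal_mono ENNReal.one_ne_top prob_le_one

lemma mdf_nonneg (x : ℝ) : 0 ≤ mdf μ Y x := by
  unfold mdf; positivity

lemma mdf_le_two (x : ℝ) : mdf μ Y x ≤ 2 := by
  unfold mdf
  have h1 := toReal_meas_le_one μ {ω | Y ω < x}
  have h2 := toReal_meas_le_one μ {ω | Y ω = x}
  nlinarith

lemma abs_mdf_le (x : ℝ) : |mdf μ Y x| ≤ 2 := by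
  rw [abs_le]
  exact ⟨by linarith [mdf_nonneg μ Y x], mdf_le_two μ Y x⟩

lemma integrable_of_bdd {f : Ω × Ω → ℝ} (hf : Measurable f) (C : ℝ)
    (hC : ∀ p, |f p| ≤ C) : Integrable f (μ.prod μ) :=
  ⟨hf.aestronglyMeasurable,
    HasFiniteIntegral.of_bounded (C := C) (Filter.Eventually.of_forall fun p => by
      simpa [Real.norm_eq_abs] using hC p)⟩

lemma integrable_of_bdd1 {f : Ω → ℝ} (hf : Measurable f) (C : ℝ)
    (hC : ∀ p, |f p| ≤ C) : Integrable f μ :=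
  ⟨hf.aestronglyMeasurable,
    HasFiniteIntegral.of_bounded (C := C) (Filter.Eventually.of_forall fun p => by
      simpa [Real.norm_eq_abs] using hC p)⟩

variable (hY : Measurable Y)
include hY

lemma measurable_mdf : Measurable (mdf μ Y) := by
  have hlt : Monotone fun x => (μ {ω | Y ω < x}).toReal := fun a b hab =>
    ENNReal.toReal_mono (measure_ne_top μ _)
      (measure_mono fun ω h => lt_of_lt_of_le h hab)
  have hle : Monotone fun x => (μ {ω | Y ω ≤ x}).toReal := fun a b hab =>
    ENNReal.toReal_mono (measure_ne_top μ _)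
      (measure_mono fun ω h => le_trans h hab)
  have key : ∀ x, (μ {ω | Y ω = x}).toReal
      = (μ {ω | Y ω ≤ x}).toReal - (μ {ω | Y ω < x}).toReal := by
    intro x
    have hsplit : μ {ω | Y ω ≤ x} = μ {ω | Y ω < x} + μ {ω | Y ω = x} := by
      rw [← measure_union (s₁ := {ω | Y ω < x}) (s₂ := {ω | Y ω = x}) (by
        intro s hs1 hs2 ω hω
        exact absurd (hs2 hω) (ne_of_lt (hs1 hω))) (hY (measurableSet_singleton x))]
      congr 1
      ext ω
      simp [le_iff_lt_or_eq]
    rw [hsplit, ENNReal.toReal_add (measure_ne_top μ _) (measure_ne_top μ _)]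
    ring
  have heq : mdf μ Y = fun x => (μ {ω | Y ω < x}).toReal
      + (1 / 2) * ((μ {ω | Y ω ≤ x}).toReal - (μ {ω | Y ω < x}).toReal) := by
    funext x; rw [mdf, key x]
  rw [heq]
  exact (hlt.measurable).add (((hle.measurable).sub hlt.measurable).const_mul _)

lemma mdf_eq_integral (x : ℝ) : mdf μ Y x = ∫ a, simFun (Y a) x ∂μ := by
  have h1 : (fun a => (if Y a < x then (1:ℝ) else 0))
      = Set.indicator {ω | Y ω < x} (fun _ => (1:ℝ)) := by
    funext a; simp [Set.indicator_apply]
  have h2 : (fun a => (if Y a = x then (1:ℝ) else 0))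
      = Set.indicator {ω | Y ω = x} (fun _ => (1:ℝ)) := by
    funext a; simp [Set.indicator_apply]
  have m1 : MeasurableSet {ω | Y ω < x} := hY measurableSet_Iio
  have m2 : MeasurableSet {ω | Y ω = x} := hY (measurableSet_singleton x)
  have i1 : Integrable (fun a => (if Y a < x then (1:ℝ) else 0)) μ := by
    rw [h1]
    exact (integrable_const (1:ℝ)).indicator m1
  have i2 : Integrable (fun a => (if Y a = x then (1:ℝ) else 0)) μ := by
    rw [h2]
    exact (integrable_const (1:ℝ)).indicator m2
  unfold simFun
  rw [integral_add i1 (i2.const_mul _), integral_const_mul]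
  unfold mdf
  congr 1
  · rw [h1, integral_indicator_const (1:ℝ) m1]
    simp [Measure.real_def]
  · congr 1
    rw [h2, integral_indicator_const (1:ℝ) m2]
    simp [Measure.real_def]

lemma integral_simFun_left (x : ℝ) : ∫ b, simFun x (Y b) ∂μ = 1 - mdf μ Y x := by
  have : ∀ b, simFun x (Y b) = 1 - simFun (Y b) x := fun b => by
    have := simFun_add_swap (Y b) x
    linarith
  simp_rw [this]
  rw [integral_sub (integrable_const 1)
    (integrable_of_bdd1 μ (f := fun b => simFun (Y b) x)
      (by exact measurable_simFun2.comp (hY.prodMk measurable_const)) 2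
        (fun b => abs_simFun_le _ _))]
  simp [mdf_eq_integral μ Y hY x]

lemma integral_mdf_half : ∫ ω, mdf μ Y (Y ω) ∂μ = 1 / 2 := by
  have hmeas : Measurable (fun p : Ω × Ω => simFun (Y p.1) (Y p.2)) :=
    measurable_simFun2.comp ((hY.comp measurable_fst).prodMk (hY.comp measurable_snd))
  have hint : Integrable (fun p : Ω × Ω => simFun (Y p.1) (Y p.2)) (μ.prod μ) :=
    integrable_of_bdd μ hmeas 2 fun p => abs_simFun_le _ _
  have hJ1 : (∫ p, simFun (Y p.1) (Y p.2) ∂(μ.prod μ)) = ∫ ω, mdf μ Y (Y ω) ∂μ := by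
    rw [integral_prod_symm _ hint]
    exact integral_congr_ae (Filter.Eventually.of_forall fun b =>
      (mdf_eq_integral μ Y hY (Y b)).symm)
  have hJ2 : (∫ p, simFun (Y p.1) (Y p.2) ∂(μ.prod μ)) = 1 - ∫ ω, mdf μ Y (Y ω) ∂μ := by
    rw [integral_prod _ hint]
    have : ∀ a, (∫ b, simFun (Y a) (Y b) ∂μ) = 1 - mdf μ Y (Y a) := fun a =>
      integral_simFun_left μ Y hY (Y a)
    rw [integral_congr_ae (Filter.Eventually.of_forall this)]
    rw [integral_sub (integrable_const 1)
      (integrable_of_bdd1 μ (f := fun ω => mdf μ Y (Y ω))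
        (by exact (measurable_mdf μ Y hY).comp hY) 2
        (fun ω => abs_mdf_le μ Y _))]
    simp
  have := hJ1.symm.trans hJ2
  linarith

end Aux

/-- `E[(Ḡ(Y'') − Ḡ(Y')) 1{Y' < Y''}] = 2 E[Ḡ(Y)²] − 1/2` for i.i.d. copies
`Y' = Y ∘ fst`, `Y'' = Y ∘ snd` on the product space. -/
theorem stmt_3 (μ : Measure Ω) [IsProbabilityMeasure μ] (Y : Ω → ℝ) (hY : Measurable Y) :
    (∫ p, (mdf μ Y (Y p.2) - mdf μ Y (Y p.1)) * (if Y p.1 < Y p.2 then (1 : ℝ) else 0)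
        ∂(μ.prod μ))
      = 2 * (∫ ω, (mdf μ Y (Y ω)) ^ 2 ∂μ) - 1 / 2 := by
  set G := mdf μ Y with hG
  have hGm : Measurable G := measurable_mdf μ Y hY
  have hGY1 : Measurable (fun p : Ω × Ω => G (Y p.1)) := hGm.comp (hY.comp measurable_fst)
  have hGY2 : Measurable (fun p : Ω × Ω => G (Y p.2)) := hGm.comp (hY.comp measurable_snd)
  have hsm : Measurable (fun p : Ω × Ω => simFun (Y p.1) (Y p.2)) :=
    measurable_simFun2.comp ((hY.comp measurable_fst).prodMk (hY.comp measurable_snd))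
  -- Step 1: rewrite the indicator as simFun
  have hpt : ∀ p : Ω × Ω,
      (G (Y p.2) - G (Y p.1)) * (if Y p.1 < Y p.2 then (1 : ℝ) else 0)
        = G (Y p.2) * simFun (Y p.1) (Y p.2) - G (Y p.1) * simFun (Y p.1) (Y p.2) := by
    intro p
    rcases lt_trichotomy (Y p.1) (Y p.2) with h | h | h
    · simp only [simFun, if_pos h, if_neg (ne_of_lt h)]; ring
    · simp [simFun, h, lt_irrefl]
    · simp [simFun, not_lt_of_gt h, ne_of_gt h]
  rw [integral_congr_ae (Filter.Eventually.of_forall hpt)]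
  have hint2 : Integrable (fun p : Ω × Ω => G (Y p.2) * simFun (Y p.1) (Y p.2)) (μ.prod μ) :=
    integrable_of_bdd μ (hGY2.mul hsm) 4 fun p => by
      calc |G (Y p.2) * simFun (Y p.1) (Y p.2)| = |G (Y p.2)| * |simFun (Y p.1) (Y p.2)| :=
            abs_mul _ _
        _ ≤ 2 * 2 := by
            exact mul_le_mul (abs_mdf_le μ Y _) (abs_simFun_le _ _) (abs_nonneg _) (by norm_num)
        _ = 4 := by norm_num
  have hint1 : Integrable (fun p : Ω × Ω => G (Y p.1) * simFun (Y p.1) (Y p.2)) (μ.prod μ) :=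
    integrable_of_bdd μ (hGY1.mul hsm) 4 fun p => by
      calc |G (Y p.1) * simFun (Y p.1) (Y p.2)| = |G (Y p.1)| * |simFun (Y p.1) (Y p.2)| :=
            abs_mul _ _
        _ ≤ 2 * 2 := by
            exact mul_le_mul (abs_mdf_le μ Y _) (abs_simFun_le _ _) (abs_nonneg _) (by norm_num)
        _ = 4 := by norm_num
  rw [integral_sub hint2 hint1]
  -- Term 1: = ∫ G².
  have hT1 : (∫ p, G (Y p.2) * simFun (Y p.1) (Y p.2) ∂(μ.prod μ))
      = ∫ ω, (G (Y ω)) ^ 2 ∂μ := by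
    rw [integral_prod_symm _ hint2]
    refine integral_congr_ae (Filter.Eventually.of_forall fun b => ?_)
    dsimp only
    rw [integral_const_mul, ← mdf_eq_integral μ Y hY (Y b)]
    ring
  -- Term 2: = 1/2 - ∫ G².
  have hT2 : (∫ p, G (Y p.1) * simFun (Y p.1) (Y p.2) ∂(μ.prod μ))
      = 1 / 2 - ∫ ω, (G (Y ω)) ^ 2 ∂μ := by
    rw [integral_prod _ hint1]
    have hinner : ∀ a, (∫ b, G (Y a) * simFun (Y a) (Y b) ∂μ)
        = G (Y a) - (G (Y a)) ^ 2 := by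
      intro a
      rw [integral_const_mul, integral_simFun_left μ Y hY (Y a)]
      ring
    rw [integral_congr_ae (Filter.Eventually.of_forall hinner)]
    have hiG : Integrable (fun ω => G (Y ω)) μ :=
      integrable_of_bdd1 μ (hGm.comp hY) 2 fun ω => abs_mdf_le μ Y _
    have hiG2 : Integrable (fun ω => (G (Y ω)) ^ 2) μ :=
      integrable_of_bdd1 μ ((hGm.comp hY).pow_const 2) 4 fun ω => by
        rw [abs_pow]
        calc |G (Y ω)| ^ 2 ≤ 2 ^ 2 := pow_le_pow_left₀ (abs_nonneg _) (abs_mdf_le μ Y _) 2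
          _ = 4 := by norm_num
    rw [integral_sub hiG hiG2, integral_mdf_half μ Y hY]
  rw [hT1, hT2]
  ring

end
end

section
/- If the outcome Y is dichotomous taking values 0 and 1 with 0 < P(Y=1) < 1, then CMA(X,Y) = AUC(X,Y), where AUC(X,Y) = E[s(X',X'') | Y' = 0, Y'' = 1] with s(a,b) = 1{a<b} + (1/2)1{a=b}. -/
open MeasureTheory ProbabilityTheory

noncomputable section

variable {Ω : Type*} [MeasurableSpace Ω]

/-- section lemma -/
lemma aux_sect (μ : Measure Ω) [IsProbabilityMeasure μ] {C : Set Ω} (hC : MeasurableSet C)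
    {T : Set (Ω × Ω)} (hT : MeasurableSet T) :
    ∫ ω in C, (μ {ω' | (ω', ω) ∈ T}).toReal ∂μ
      = ((μ.prod μ) (T ∩ {p : Ω × Ω | p.2 ∈ C})).toReal := by
  have hmeas : Measurable fun ω => μ ((fun x => (x, ω)) ⁻¹' T) :=
    measurable_measure_prodMk_right hT
  have h1 : ∫ ω in C, (μ {ω' | (ω', ω) ∈ T}).toReal ∂μ
      = (∫⁻ ω in C, μ {ω' | (ω', ω) ∈ T} ∂μ).toReal := by
    refine integral_toReal (hmeas.aemeasurable.restrict) ?_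
    exact Filter.Eventually.of_forall fun ω => measure_lt_top μ _
  rw [h1]
  congr 1
  rw [Measure.prod_apply_symm (μ := μ) (ν := μ) (s := T ∩ {p : Ω × Ω | p.2 ∈ C}) (hT.inter (measurable_snd hC))]
  rw [← lintegral_indicator hC]
  congr 1
  funext ω
  by_cases h : ω ∈ C
  · simp only [Set.indicator_of_mem h]
    congr 1
    ext x
    simp [h]
  · simp only [Set.indicator_of_notMem h]
    have he : (fun x => (x, ω)) ⁻¹' (T ∩ {p : Ω × Ω | p.2 ∈ C}) = ∅ := by
      ext x; simp [h]
    rw [he, measure_empty]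

lemma aux_swap (μ : Measure Ω) [IsProbabilityMeasure μ] {T : Set (Ω × Ω)}
    (hT : MeasurableSet T) : (μ.prod μ) (Prod.swap ⁻¹' T) = (μ.prod μ) T := by
  conv_rhs => rw [← Measure.prod_swap]
  rw [Measure.map_apply measurable_swap hT]

/-- partition lemma: for a swap-invariant measurable `B`,
`m B = 2 m(B ∩ {X₁<X₂}) + m(B ∩ {X₁=X₂})`. -/
lemma aux_part (μ : Measure Ω) [IsProbabilityMeasure μ] {X : Ω → ℝ} (hX : Measurable X)
    {B : Set (Ω × Ω)} (hB : MeasurableSet B) (hsymm : Prod.swap ⁻¹' B = B) :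
    (μ.prod μ) B = 2 * (μ.prod μ) (B ∩ {p : Ω × Ω | X p.1 < X p.2})
      + (μ.prod μ) (B ∩ {p : Ω × Ω | X p.1 = X p.2}) := by
  have hX1 : Measurable fun p : Ω × Ω => X p.1 := hX.comp measurable_fst
  have hX2 : Measurable fun p : Ω × Ω => X p.2 := hX.comp measurable_snd
  have hlt : MeasurableSet {p : Ω × Ω | X p.1 < X p.2} := measurableSet_lt hX1 hX2
  have hgt : MeasurableSet {p : Ω × Ω | X p.2 < X p.1} := measurableSet_lt hX2 hX1
  have heq : MeasurableSet {p : Ω × Ω | X p.1 = X p.2} := measurableSet_eq_fun hX1 hX2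
  have hswap : (μ.prod μ) (B ∩ {p : Ω × Ω | X p.2 < X p.1})
      = (μ.prod μ) (B ∩ {p : Ω × Ω | X p.1 < X p.2}) := by
    rw [← aux_swap μ (hB.inter hlt)]
    congr 1
    ext p
    simp only [Set.mem_preimage, Set.mem_inter_iff, Set.mem_setOf_eq, Prod.fst_swap,
      Prod.snd_swap, Prod.swap]
    constructor
    · rintro ⟨h1, h2⟩; exact ⟨by rw [← hsymm]; exact h1, h2⟩
    · rintro ⟨h1, h2⟩; exact ⟨by rw [← hsymm] at h1; exact h1, h2⟩
  have hunion : B = (B ∩ {p : Ω × Ω | X p.1 < X p.2}) ∪ ((B ∩ {p : Ω × Ω | X p.1 = X p.2})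
      ∪ (B ∩ {p : Ω × Ω | X p.2 < X p.1})) := by
    ext p
    simp only [Set.mem_union, Set.mem_inter_iff, Set.mem_setOf_eq]
    rcases lt_trichotomy (X p.1) (X p.2) with h | h | h <;> tauto
  have hd1 : Disjoint (B ∩ {p : Ω × Ω | X p.1 < X p.2})
      ((B ∩ {p : Ω × Ω | X p.1 = X p.2}) ∪ (B ∩ {p : Ω × Ω | X p.2 < X p.1})) := by
    rw [Set.disjoint_left]
    rintro p ⟨-, h1⟩ (⟨-, h2⟩ | ⟨-, h2⟩) <;> simp only [Set.mem_setOf_eq] at h1 h2 <;> linarith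
  have hd2 : Disjoint (B ∩ {p : Ω × Ω | X p.1 = X p.2}) (B ∩ {p : Ω × Ω | X p.2 < X p.1}) := by
    rw [Set.disjoint_left]
    rintro p ⟨-, h1⟩ ⟨-, h2⟩; simp only [Set.mem_setOf_eq] at h1 h2; linarith
  calc (μ.prod μ) B = (μ.prod μ) (B ∩ {p : Ω × Ω | X p.1 < X p.2})
        + ((μ.prod μ) (B ∩ {p : Ω × Ω | X p.1 = X p.2})
          + (μ.prod μ) (B ∩ {p : Ω × Ω | X p.2 < X p.1})) := by
        conv_lhs => rw [hunion]
        rw [measure_union hd1 ((hB.inter heq).union (hB.inter hgt)),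
          measure_union hd2 (hB.inter hgt)]
    _ = _ := by rw [hswap]; ring


set_option maxHeartbeats 1000000 in
/-- if `Y` is dichotomous with values in `{0,1}` and `0 < P(Y = 1) < 1`, then
`CMA(X,Y) = AUC(X,Y) = E[s(X',X'') | Y' = 0, Y'' = 1]`. -/
theorem stmt_6 (μ : Measure Ω) [IsProbabilityMeasure μ] (X Y : Ω → ℝ)
    (hX : Measurable X) (hY : Measurable Y) (hXnd : Nondeg μ X)
    (hbin : ∀ ω, Y ω = 0 ∨ Y ω = 1)
    (h0 : 0 < μ {ω | Y ω = 1}) (h1 : μ {ω | Y ω = 1} < 1) :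
    cma μ X Y =
      (∫ p in {p : Ω × Ω | Y p.1 = 0 ∧ Y p.2 = 1}, simFun (X p.1) (X p.2) ∂(μ.prod μ))
        / ((μ.prod μ) {p : Ω × Ω | Y p.1 = 0 ∧ Y p.2 = 1}).toReal := by
  classical
  have hA : MeasurableSet {ω | Y ω = 1} := hY (measurableSet_singleton 1)
  have hAc : {ω | Y ω = 1}ᶜ = {ω | Y ω = 0} := by
    ext ω
    simp only [Set.mem_compl_iff, Set.mem_setOf_eq]
    rcases hbin ω with h | h <;> simp [h]
  set p : ℝ := (μ {ω | Y ω = 1}).toReal with hpdef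
  have hμA_ne : μ {ω | Y ω = 1} ≠ ⊤ := measure_ne_top μ _
  have hp0 : 0 < p := ENNReal.toReal_pos h0.ne' hμA_ne
  have hp1 : p < 1 := by
    have := (ENNReal.toReal_lt_toReal hμA_ne (by norm_num : (1:ENNReal) ≠ ⊤)).mpr h1
    simpa using this
  have hcomp : (μ {ω | Y ω = 1}ᶜ).toReal = 1 - p := by
    rw [prob_compl_eq_one_sub hA, ENNReal.toReal_sub_of_le prob_le_one (by norm_num)]
    simp [hpdef]
  have hX1 : Measurable fun q : Ω × Ω => X q.1 := hX.comp measurable_fst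
  have hX2 : Measurable fun q : Ω × Ω => X q.2 := hX.comp measurable_snd
  have hTlt : MeasurableSet {q : Ω × Ω | X q.1 < X q.2} := measurableSet_lt hX1 hX2
  have hTeq : MeasurableSet {q : Ω × Ω | X q.1 = X q.2} := measurableSet_eq_fun hX1 hX2
  -- splitting lemma
  have hsplit : ∀ T : Set (Ω × Ω), MeasurableSet T →
      (μ.prod μ) (T ∩ {q : Ω × Ω | Y q.2 = 1})
        = (μ.prod μ) (T ∩ {ω | Y ω = 1}ᶜ ×ˢ {ω | Y ω = 1})
          + (μ.prod μ) (T ∩ {ω | Y ω = 1} ×ˢ {ω | Y ω = 1}) := by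
    intro T hT
    have hu : T ∩ {q : Ω × Ω | Y q.2 = 1}
        = (T ∩ {ω | Y ω = 1}ᶜ ×ˢ {ω | Y ω = 1}) ∪ (T ∩ {ω | Y ω = 1} ×ˢ {ω | Y ω = 1}) := by
      ext q
      simp only [Set.mem_inter_iff, Set.mem_union, Set.mem_prod, Set.mem_compl_iff,
        Set.mem_setOf_eq]
      tauto
    rw [hu, measure_union ?_ (hT.inter (hA.prod hA))]
    rw [Set.disjoint_left]
    rintro q ⟨-, hq1, -⟩ ⟨-, hq2, -⟩
    exact hq1 hq2
  -- swap-invariance of A ×ˢ A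
  have hsymmAA : Prod.swap ⁻¹' ({ω | Y ω = 1} ×ˢ {ω | Y ω = 1})
      = {ω | Y ω = 1} ×ˢ {ω | Y ω = 1} := by
    ext q; simp only [Set.mem_preimage, Set.mem_prod, Prod.fst_swap, Prod.snd_swap]; tauto
  -- key ENNReal identities
  have hENN1 := aux_part μ hX (hA.prod hA) hsymmAA
  rw [Measure.prod_prod] at hENN1
  have hbf : 2 * ((μ.prod μ) ({ω | Y ω = 1} ×ˢ {ω | Y ω = 1} ∩ {q : Ω × Ω | X q.1 < X q.2})).toReal
      + ((μ.prod μ) ({ω | Y ω = 1} ×ˢ {ω | Y ω = 1} ∩ {q : Ω × Ω | X q.1 = X q.2})).toReal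
      = p * p := by
    have := congrArg ENNReal.toReal hENN1
    rw [ENNReal.toReal_mul, ENNReal.toReal_add (by finiteness) (by finiteness),
      ENNReal.toReal_mul] at this
    simpa using this.symm
  have hsymmU : Prod.swap ⁻¹' (Set.univ : Set (Ω × Ω)) = Set.univ := by simp
  have hENN2 := aux_part μ hX MeasurableSet.univ hsymmU
  rw [measure_univ] at hENN2
  have hLE : 2 * ((μ.prod μ) (Set.univ ∩ {q : Ω × Ω | X q.1 < X q.2})).toReal
      + ((μ.prod μ) (Set.univ ∩ {q : Ω × Ω | X q.1 = X q.2})).toReal = 1 := by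
    have := congrArg ENNReal.toReal hENN2
    rw [ENNReal.toReal_add (by finiteness) (by finiteness), ENNReal.toReal_mul] at this
    simpa using this.symm
  -- mdf of Y
  have hY0 : {ω | Y ω < 0} = ∅ := by
    ext ω; simp only [Set.mem_setOf_eq, Set.mem_empty_iff_false, iff_false, not_lt]
    rcases hbin ω with h | h <;> rw [h] <;> norm_num
  have hY1lt : {ω | Y ω < 1} = {ω | Y ω = 0} := by
    ext ω; simp only [Set.mem_setOf_eq]
    rcases hbin ω with h | h <;> rw [h] <;> norm_num
  have hGω : ∀ ω, mdf μ Y (Y ω)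
      = (1 - p) / 2 + 2⁻¹ * Set.indicator {ω | Y ω = 1} (fun _ => (1:ℝ)) ω := by
    intro ω
    rcases hbin ω with h | h
    · have hnm : ω ∉ {ω | Y ω = 1} := by simp [Set.mem_setOf_eq, h]
      rw [mdf, h, hY0, Set.indicator_of_notMem hnm, ← hAc]
      rw [show {ω' | Y ω' = 0} = {ω | Y ω = 1}ᶜ from hAc.symm] at *
      simp [hcomp]
      ring
    · have hm : ω ∈ {ω | Y ω = 1} := h
      rw [mdf, h, hY1lt, ← hAc, Set.indicator_of_mem hm, hcomp]
      have : (μ {ω' | Y ω' = 1}).toReal = p := rfl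
      rw [this]; ring
  -- measurability and integrability of pieces of F
  have hf1m : Measurable fun ω => (μ {ω' | X ω' < X ω}).toReal := by
    have := (measurable_measure_prodMk_right (μ := μ) hTlt).ennreal_toReal
    exact this
  have hf2m : Measurable fun ω => (μ {ω' | X ω' = X ω}).toReal := by
    have := (measurable_measure_prodMk_right (μ := μ) hTeq).ennreal_toReal
    exact this
  have htoR : ∀ s : Set Ω, (μ s).toReal ≤ 1 := fun s => by
    simpa using ENNReal.toReal_mono (by norm_num) (prob_le_one (μ := μ) (s := s))
  have hbound : ∀ (g : Ω → ℝ), Measurable g → (∀ ω, 0 ≤ g ω) → (∀ ω, g ω ≤ 2) →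
      Integrable g μ := by
    intro g hg hg0 hg2
    refine ⟨hg.aestronglyMeasurable, HasFiniteIntegral.of_bounded (C := 2) ?_⟩
    exact Filter.Eventually.of_forall fun ω => by
      rw [Real.norm_eq_abs, abs_of_nonneg (hg0 ω)]; exact hg2 ω
  have hf1i : Integrable (fun ω => (μ {ω' | X ω' < X ω}).toReal) μ :=
    hbound _ hf1m (fun ω => ENNReal.toReal_nonneg) (fun ω => le_trans (htoR _) one_le_two)
  have hf2i : Integrable (fun ω => (μ {ω' | X ω' = X ω}).toReal) μ :=
    hbound _ hf2m (fun ω => ENNReal.toReal_nonneg) (fun ω => le_trans (htoR _) one_le_two)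
  have hFm : Measurable fun ω => mdf μ X (X ω) := by
    simp only [mdf]
    exact hf1m.add (measurable_const.mul hf2m)
  have hFi : Integrable (fun ω => mdf μ X (X ω)) μ := by
    simp only [mdf]
    exact hf1i.add (hf2i.const_mul _)
  -- set-integral identities from aux_sect
  have hs1 : ∫ ω, (μ {ω' | X ω' < X ω}).toReal ∂μ
      = ((μ.prod μ) (Set.univ ∩ {q : Ω × Ω | X q.1 < X q.2})).toReal := by
    have h := aux_sect μ MeasurableSet.univ hTlt
    rw [Measure.restrict_univ] at h
    simp only [Set.mem_setOf_eq] at h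
    rw [h]
    congr 1
    congr 1
    ext q; simp
  have hs2 : ∫ ω, (μ {ω' | X ω' = X ω}).toReal ∂μ
      = ((μ.prod μ) (Set.univ ∩ {q : Ω × Ω | X q.1 = X q.2})).toReal := by
    have h := aux_sect μ MeasurableSet.univ hTeq
    rw [Measure.restrict_univ] at h
    simp only [Set.mem_setOf_eq] at h
    rw [h]
    congr 1
    congr 1
    ext q; simp
  have hs3 : ∫ ω in {ω | Y ω = 1}, (μ {ω' | X ω' < X ω}).toReal ∂μ
      = ((μ.prod μ) ({q : Ω × Ω | X q.1 < X q.2} ∩ {ω | Y ω = 1}ᶜ ×ˢ {ω | Y ω = 1})).toReal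
        + ((μ.prod μ) ({q : Ω × Ω | X q.1 < X q.2} ∩ {ω | Y ω = 1} ×ˢ {ω | Y ω = 1})).toReal := by
    have h := aux_sect μ hA hTlt
    simp only [Set.mem_setOf_eq] at h
    rw [h, hsplit _ hTlt, ENNReal.toReal_add (by finiteness) (by finiteness)]
  have hs4 : ∫ ω in {ω | Y ω = 1}, (μ {ω' | X ω' = X ω}).toReal ∂μ
      = ((μ.prod μ) ({q : Ω × Ω | X q.1 = X q.2} ∩ {ω | Y ω = 1}ᶜ ×ˢ {ω | Y ω = 1})).toReal
        + ((μ.prod μ) ({q : Ω × Ω | X q.1 = X q.2} ∩ {ω | Y ω = 1} ×ˢ {ω | Y ω = 1})).toReal := by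
    have h := aux_sect μ hA hTeq
    simp only [Set.mem_setOf_eq] at h
    rw [h, hsplit _ hTeq, ENNReal.toReal_add (by finiteness) (by finiteness)]
  -- integral of F
  have hI1 : ∫ ω, mdf μ X (X ω) ∂μ = 1 / 2 := by
    simp only [mdf]
    rw [integral_add hf1i (hf2i.const_mul _), integral_const_mul, hs1, hs2]
    linarith [hLE]
  -- integral of F over A
  have hJ : ∫ ω in {ω | Y ω = 1}, mdf μ X (X ω) ∂μ
      = (((μ.prod μ) ({q : Ω × Ω | X q.1 < X q.2} ∩ {ω | Y ω = 1}ᶜ ×ˢ {ω | Y ω = 1})).toReal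
        + ((μ.prod μ) ({q : Ω × Ω | X q.1 < X q.2} ∩ {ω | Y ω = 1} ×ˢ {ω | Y ω = 1})).toReal)
        + 2⁻¹ * (((μ.prod μ) ({q : Ω × Ω | X q.1 = X q.2} ∩ {ω | Y ω = 1}ᶜ ×ˢ {ω | Y ω = 1})).toReal
        + ((μ.prod μ) ({q : Ω × Ω | X q.1 = X q.2} ∩ {ω | Y ω = 1} ×ˢ {ω | Y ω = 1})).toReal) := by
    simp only [mdf]
    rw [integral_add hf1i.restrict (hf2i.restrict.const_mul _), integral_const_mul, hs3, hs4]
    norm_num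
  -- integrals involving G
  have hindi : Integrable (Set.indicator {ω | Y ω = 1} (fun _ => (1:ℝ))) μ :=
    (integrable_const 1).indicator hA
  have hI3 : ∫ ω, ((1 - p) / 2 + 2⁻¹ * Set.indicator {ω | Y ω = 1} (fun _ => (1:ℝ)) ω) ∂μ
      = (1 - p) / 2 + 2⁻¹ * p := by
    rw [integral_add (integrable_const _) (hindi.const_mul _), integral_const,
      integral_const_mul, integral_indicator_const _ hA]
    simp [hpdef, measureReal_def]
  have hI4 : ∫ ω, ((1 - p) / 2 + 2⁻¹ * Set.indicator {ω | Y ω = 1} (fun _ => (1:ℝ)) ω)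
        * ((1 - p) / 2 + 2⁻¹ * Set.indicator {ω | Y ω = 1} (fun _ => (1:ℝ)) ω) ∂μ
      = ((1 - p) / 2) ^ 2 + ((1 - p) / 2 + 4⁻¹) * p := by
    have hsq : ∀ ω, ((1 - p) / 2 + 2⁻¹ * Set.indicator {ω | Y ω = 1} (fun _ => (1:ℝ)) ω)
        * ((1 - p) / 2 + 2⁻¹ * Set.indicator {ω | Y ω = 1} (fun _ => (1:ℝ)) ω)
        = ((1 - p) / 2) ^ 2 + (((1 - p) / 2) + 4⁻¹)
            * Set.indicator {ω | Y ω = 1} (fun _ => (1:ℝ)) ω := by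
      intro ω
      by_cases h : ω ∈ {ω | Y ω = 1} <;> simp [Set.indicator_apply, h] <;> ring
    simp only [hsq]
    rw [integral_add (integrable_const _) (hindi.const_mul _), integral_const,
      integral_const_mul, integral_indicator_const _ hA]
    simp [hpdef, measureReal_def]
  have hI2 : ∫ ω, mdf μ X (X ω)
        * ((1 - p) / 2 + 2⁻¹ * Set.indicator {ω | Y ω = 1} (fun _ => (1:ℝ)) ω) ∂μ
      = (1 - p) / 2 * (1 / 2) + 2⁻¹ * ∫ ω in {ω | Y ω = 1}, mdf μ X (X ω) ∂μ := by
    have hpt : ∀ ω, mdf μ X (X ω)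
        * ((1 - p) / 2 + 2⁻¹ * Set.indicator {ω | Y ω = 1} (fun _ => (1:ℝ)) ω)
        = (1 - p) / 2 * mdf μ X (X ω)
          + 2⁻¹ * Set.indicator {ω | Y ω = 1} (fun ω => mdf μ X (X ω)) ω := by
      intro ω
      by_cases h : ω ∈ {ω | Y ω = 1} <;> simp [Set.indicator_apply, h] <;> ring
    simp only [hpt]
    rw [integral_add (hFi.const_mul _) ((hFi.indicator hA).const_mul _), integral_const_mul,
      integral_const_mul, integral_indicator hA, hI1]
  -- rewrite the goal set as a product
  have hS : {q : Ω × Ω | Y q.1 = 0 ∧ Y q.2 = 1} = {ω | Y ω = 1}ᶜ ×ˢ {ω | Y ω = 1} := by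
    ext q
    simp only [Set.mem_setOf_eq, Set.mem_prod, Set.mem_compl_iff]
    rcases hbin q.1 with h | h <;> simp [h]
  -- RHS numerator
  have hsim : ∀ q : Ω × Ω, simFun (X q.1) (X q.2)
      = Set.indicator {q : Ω × Ω | X q.1 < X q.2} (fun _ => (1:ℝ)) q
        + 2⁻¹ * Set.indicator {q : Ω × Ω | X q.1 = X q.2} (fun _ => (1:ℝ)) q := by
    intro q
    simp [simFun, Set.indicator_apply, Set.mem_setOf_eq]
  have hRHSnum : ∫ q in {q : Ω × Ω | Y q.1 = 0 ∧ Y q.2 = 1}, simFun (X q.1) (X q.2) ∂(μ.prod μ)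
      = ((μ.prod μ) ({q : Ω × Ω | X q.1 < X q.2} ∩ {ω | Y ω = 1}ᶜ ×ˢ {ω | Y ω = 1})).toReal
        + 2⁻¹ * ((μ.prod μ) ({q : Ω × Ω | X q.1 = X q.2} ∩ {ω | Y ω = 1}ᶜ ×ˢ {ω | Y ω = 1})).toReal := by
    rw [hS]
    simp only [hsim]
    rw [integral_add (((integrable_const 1).indicator hTlt).restrict)
      ((((integrable_const 1).indicator hTeq).restrict).const_mul _), integral_const_mul,
      setIntegral_indicator hTlt, setIntegral_indicator hTeq, setIntegral_const,
      setIntegral_const]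
    rw [Set.inter_comm _ {q : Ω × Ω | X q.1 < X q.2}, Set.inter_comm _ {q : Ω × Ω | X q.1 = X q.2}]
    simp [measureReal_def]
  have hRHSden : ((μ.prod μ) {q : Ω × Ω | Y q.1 = 0 ∧ Y q.2 = 1}).toReal = (1 - p) * p := by
    rw [hS, Measure.prod_prod, ENNReal.toReal_mul, hcomp]
  -- put it all together
  rw [cma, agc, covar, covar]
  simp only [hGω]
  rw [hI1, hI2, hI3, hI4, hJ, hRHSnum, hRHSden]
  have hne1 : p ≠ 0 := ne_of_gt hp0
  have hne2 : 1 - p ≠ 0 := by linarith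
  set a := ((μ.prod μ) ({q : Ω × Ω | X q.1 < X q.2} ∩ {ω | Y ω = 1}ᶜ ×ˢ {ω | Y ω = 1})).toReal
  set b := ((μ.prod μ) ({q : Ω × Ω | X q.1 < X q.2} ∩ {ω | Y ω = 1} ×ˢ {ω | Y ω = 1})).toReal
  set e := ((μ.prod μ) ({q : Ω × Ω | X q.1 = X q.2} ∩ {ω | Y ω = 1}ᶜ ×ˢ {ω | Y ω = 1})).toReal
  set f := ((μ.prod μ) ({q : Ω × Ω | X q.1 = X q.2} ∩ {ω | Y ω = 1} ×ˢ {ω | Y ω = 1})).toReal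
  have hbf' : 2 * b + f = p * p := by
    have := hbf
    rw [Set.inter_comm, Set.inter_comm ({ω | Y ω = 1} ×ˢ {ω | Y ω = 1})] at this
    exact this
  have hden : ((1 - p) / 2) ^ 2 + ((1 - p) / 2 + 4⁻¹) * p
      - ((1 - p) / 2 + 2⁻¹ * p) * ((1 - p) / 2 + 2⁻¹ * p) = p * (1 - p) / 4 := by ring
  rw [hden]
  have hdne : p * (1 - p) / 4 ≠ 0 := by positivity
  field_simp
  nlinarith [hbf']

end
end

section
/- If X and Y are continuous (atomless) real-valued random variables with CDFs F, G, then CMA(X,Y) = 6 E[(G(Y'') − G(Y')) 1{Y' < Y''} 1{X' < X''}], and this quantity is symmetric: CMA(X,Y) = CMA(Y,X), with 2 CMA(X,Y) − 1 = 12 Cov(F(X), G(Y)) (Spearman's rho). -/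
open MeasureTheory ProbabilityTheory

noncomputable section

variable {Ω : Type*} [MeasurableSpace Ω]

/-- CDF of `X` under `μ`. -/
def cdfOf (μ : Measure Ω) (X : Ω → ℝ) (x : ℝ) : ℝ := (μ {ω | X ω ≤ x}).toReal

namespace Stmt7Aux

open MeasureTheory ProbabilityTheory Set Filter Function

variable {ν : Measure ℝ} [IsProbabilityMeasure ν]

lemma cdf_leftLim (hν : ∀ x : ℝ, ν {x} = 0) (x : ℝ) :
    leftLim (cdf ν) x = cdf ν x := by
  have h := (cdf ν).measure_singleton x
  rw [measure_cdf, hν x] at h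
  have h2 : cdf ν x - leftLim (cdf ν) x ≤ 0 := by
    by_contra hc
    push_neg at hc
    rw [eq_comm, ENNReal.ofReal_eq_zero] at h
    linarith
  have h3 := (monotone_cdf ν).leftLim_le (le_refl x)
  linarith

lemma cdf_cont (hν : ∀ x : ℝ, ν {x} = 0) : Continuous (cdf ν) := by
  rw [continuous_iff_continuousAt]
  intro x
  rw [(monotone_cdf ν).continuousAt_iff_leftLim_eq_rightLim]
  rw [cdf_leftLim hν, (cdf ν).rightLim_eq]

lemma cdf_level_null (hν : ∀ x : ℝ, ν {x} = 0) (t : ℝ) :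
    ν {x | cdf ν x = t} = 0 := by
  set F := cdf ν with hF
  set S := {x | F x = t} with hS
  rcases eq_empty_or_nonempty S with h | ⟨x₀, hx₀⟩
  · rw [h]; exact measure_empty
  have hSc : IsClosed S := isClosed_eq (cdf_cont hν) continuous_const
  have hIcc : ∀ a b, a ∈ S → b ∈ S → ν (Icc a b) = 0 := by
    intro a b ha hb
    rw [← measure_cdf ν, (cdf ν).measure_Icc, cdf_leftLim hν]
    have : cdf ν b - cdf ν a = 0 := by rw [ha, hb]; ring
    rw [this, ENNReal.ofReal_zero]
  have hup : ν (S ∩ Ici x₀) = 0 := by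
    by_cases hb : BddAbove S
    · have hbS : sSup S ∈ S := hSc.csSup_mem ⟨x₀, hx₀⟩ hb
      refine measure_mono_null (fun x hx => ?_) (hIcc x₀ (sSup S) hx₀ hbS)
      exact ⟨hx.2, le_csSup hb hx.1⟩
    · have hall : ∀ y, x₀ ≤ y → y ∈ S := by
        intro y hy
        rcases not_bddAbove_iff.1 hb y with ⟨s, hsS, hys⟩
        have h1 : F x₀ ≤ F y := (monotone_cdf ν) hy
        have h2 : F y ≤ F s := (monotone_cdf ν) hys.le
        have := hx₀; have := hsS
        simp only [hS, mem_setOf_eq] at *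
        linarith
      have : Ici x₀ ⊆ ⋃ n : ℕ, Icc x₀ (x₀ + n) := by
        intro x hx
        rcases exists_nat_ge (x - x₀) with ⟨n, hn⟩
        exact mem_iUnion.2 ⟨n, hx, by linarith⟩
      refine measure_mono_null (fun x hx => this hx.2) (measure_iUnion_null fun n => ?_)
      exact hIcc _ _ hx₀ (hall _ (by linarith [Nat.cast_nonneg (α := ℝ) n]))
  have hdn : ν (S ∩ Iic x₀) = 0 := by
    by_cases hb : BddBelow S
    · have hbS : sInf S ∈ S := hSc.csInf_mem ⟨x₀, hx₀⟩ hb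
      refine measure_mono_null (fun x hx => ?_) (hIcc (sInf S) x₀ hbS hx₀)
      exact ⟨csInf_le hb hx.1, hx.2⟩
    · have hall : ∀ y, y ≤ x₀ → y ∈ S := by
        intro y hy
        rcases not_bddBelow_iff.1 hb y with ⟨s, hsS, hys⟩
        have h1 : F y ≤ F x₀ := (monotone_cdf ν) hy
        have h2 : F s ≤ F y := (monotone_cdf ν) hys.le
        have := hx₀; have := hsS
        simp only [hS, mem_setOf_eq] at *
        linarith
      have : Iic x₀ ⊆ ⋃ n : ℕ, Icc (x₀ - n) x₀ := by
        intro x hx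
        rcases exists_nat_ge (x₀ - x) with ⟨n, hn⟩
        exact mem_iUnion.2 ⟨n, by linarith, hx⟩
      refine measure_mono_null (fun x hx => this hx.2) (measure_iUnion_null fun n => ?_)
      exact hIcc _ _ (hall _ (by linarith [Nat.cast_nonneg (α := ℝ) n])) hx₀
  have hsub : S ⊆ (S ∩ Ici x₀) ∪ (S ∩ Iic x₀) := fun x hx => by
    rcases le_total x₀ x with h | h
    · exact Or.inl ⟨hx, h⟩
    · exact Or.inr ⟨hx, h⟩
  exact measure_mono_null hsub (measure_union_null hup hdn)

variable {Ω : Type*} [MeasurableSpace Ω] {μ : Measure Ω} [IsProbabilityMeasure μ]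
  {Z : Ω → ℝ}

/-- CDF of `X` under `μ`. (duplicate of the pinned def, for the aux development) -/
def cdfOf' (μ : Measure Ω) (X : Ω → ℝ) (x : ℝ) : ℝ := (μ {ω | X ω ≤ x}).toReal

section Z
variable (hZ : Measurable Z) (hZc : ∀ z : ℝ, μ {ω | Z ω = z} = 0)
include hZ hZc
set_option linter.unusedSectionVars false

lemma map_atomless (z : ℝ) : (μ.map Z) {z} = 0 := by
  rw [Measure.map_apply hZ (measurableSet_singleton z)]
  exact hZc z

lemma cdfOf_eq_cdf (z : ℝ) : cdfOf' μ Z z = cdf (μ.map Z) z := by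
  have : IsProbabilityMeasure (μ.map Z) := Measure.isProbabilityMeasure_map hZ.aemeasurable
  rw [cdf_eq_real, measureReal_def, Measure.map_apply hZ measurableSet_Iic]
  rfl

lemma cdfOf_mono : Monotone (cdfOf' μ Z) := by
  intro a b hab
  rw [cdfOf_eq_cdf hZ hZc, cdfOf_eq_cdf hZ hZc]
  have : IsProbabilityMeasure (μ.map Z) := Measure.isProbabilityMeasure_map hZ.aemeasurable
  exact monotone_cdf _ hab

lemma cdfOf_meas : Measurable (cdfOf' μ Z) := (cdfOf_mono hZ hZc).measurable

lemma cdfOf_nonneg (z : ℝ) : 0 ≤ cdfOf' μ Z z := ENNReal.toReal_nonneg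

lemma cdfOf_le_one (z : ℝ) : cdfOf' μ Z z ≤ 1 := by
  have : IsProbabilityMeasure (μ.map Z) := Measure.isProbabilityMeasure_map hZ.aemeasurable
  rw [cdfOf_eq_cdf hZ hZc]; exact cdf_le_one _ _

lemma measure_le_eq (z : ℝ) : μ {ω | Z ω ≤ z} = ENNReal.ofReal (cdfOf' μ Z z) :=
  (ENNReal.ofReal_toReal (measure_ne_top μ _)).symm

lemma measure_lt_eq (z : ℝ) : μ {ω | Z ω < z} = ENNReal.ofReal (cdfOf' μ Z z) := by
  rw [← measure_le_eq hZ hZc]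
  have h1 : μ {ω | Z ω ≤ z} ≤ μ {ω | Z ω < z} + μ {ω | Z ω = z} := by
    refine (measure_mono (fun ω hω => ?_)).trans (measure_union_le _ _)
    simp only [mem_setOf_eq] at hω
    rcases lt_or_eq_of_le hω with h | h
    · exact Or.inl h
    · exact Or.inr h
  rw [hZc z, add_zero] at h1
  exact le_antisymm (measure_mono fun ω (hω : Z ω < z) => le_of_lt hω) h1

lemma level_null (t : ℝ) : μ {ω | cdfOf' μ Z (Z ω) = t} = 0 := by
  have hpm : IsProbabilityMeasure (μ.map Z) := Measure.isProbabilityMeasure_map hZ.aemeasurable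
  have h0 : {ω | cdfOf' μ Z (Z ω) = t} = Z ⁻¹' {x | cdf (μ.map Z) x = t} := by
    ext ω; simp [cdfOf_eq_cdf hZ hZc]
  rw [h0, ← Measure.map_apply hZ]
  · exact cdf_level_null (map_atomless hZ hZc) t
  · exact (monotone_cdf _).measurable (measurableSet_singleton t)

lemma KL_le (y : ℝ) :
    μ {ω | cdfOf' μ Z (Z ω) ≤ cdfOf' μ Z y} = ENNReal.ofReal (cdfOf' μ Z y) := by
  refine le_antisymm ?_ ?_
  · have hsub : {ω | cdfOf' μ Z (Z ω) ≤ cdfOf' μ Z y} ⊆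
        {ω | Z ω ≤ y} ∪ {ω | cdfOf' μ Z (Z ω) = cdfOf' μ Z y} := by
      intro ω hω
      simp only [mem_setOf_eq] at hω ⊢
      rcases le_or_gt (Z ω) y with h | h
      · exact Or.inl h
      · exact Or.inr (le_antisymm hω (cdfOf_mono hZ hZc h.le))
    calc μ {ω | cdfOf' μ Z (Z ω) ≤ cdfOf' μ Z y}
        ≤ μ ({ω | Z ω ≤ y} ∪ {ω | cdfOf' μ Z (Z ω) = cdfOf' μ Z y}) := measure_mono hsub
      _ ≤ μ {ω | Z ω ≤ y} + μ {ω | cdfOf' μ Z (Z ω) = cdfOf' μ Z y} := measure_union_le _ _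
      _ = ENNReal.ofReal (cdfOf' μ Z y) := by
          rw [level_null hZ hZc, add_zero, measure_le_eq hZ hZc]
  · rw [← measure_le_eq hZ hZc y]
    exact measure_mono fun ω hω => cdfOf_mono hZ hZc hω

lemma KL_lt (y : ℝ) :
    μ {ω | cdfOf' μ Z (Z ω) < cdfOf' μ Z y} = ENNReal.ofReal (cdfOf' μ Z y) := by
  refine le_antisymm ?_ ?_
  · rw [← measure_le_eq hZ hZc y]
    refine measure_mono fun ω hω => ?_
    simp only [mem_setOf_eq] at hω ⊢
    by_contra hc
    push_neg at hc
    exact absurd (cdfOf_mono hZ hZc hc.le) (not_le.2 hω)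
  · have hsub : {ω | Z ω < y} ⊆
        {ω | cdfOf' μ Z (Z ω) < cdfOf' μ Z y} ∪ {ω | cdfOf' μ Z (Z ω) = cdfOf' μ Z y} := by
      intro ω hω
      simp only [mem_setOf_eq] at hω ⊢
      rcases lt_or_eq_of_le (cdfOf_mono hZ hZc (le_of_lt hω)) with h | h
      · exact Or.inl h
      · exact Or.inr h
    calc ENNReal.ofReal (cdfOf' μ Z y) = μ {ω | Z ω < y} := (measure_lt_eq hZ hZc y).symm
      _ ≤ μ ({ω | cdfOf' μ Z (Z ω) < cdfOf' μ Z y} ∪ {ω | cdfOf' μ Z (Z ω) = cdfOf' μ Z y}) :=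
          measure_mono hsub
      _ ≤ _ + μ {ω | cdfOf' μ Z (Z ω) = cdfOf' μ Z y} := measure_union_le _ _
      _ = μ {ω | cdfOf' μ Z (Z ω) < cdfOf' μ Z y} := by rw [level_null hZ hZc, add_zero]

lemma cdfOf_surj (t : ℝ) (ht0 : 0 < t) (ht1 : t < 1) : ∃ y, cdfOf' μ Z y = t := by
  have hpm : IsProbabilityMeasure (μ.map Z) := Measure.isProbabilityMeasure_map hZ.aemeasurable
  set F := cdf (μ.map Z)
  have hbot := tendsto_cdf_atBot (μ.map Z)
  have htop := tendsto_cdf_atTop (μ.map Z)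
  obtain ⟨a, ha⟩ : ∃ a, F a < t := by
    have := hbot.eventually (eventually_lt_nhds ht0)
    rcases this.exists with ⟨a, ha⟩
    exact ⟨a, ha⟩
  obtain ⟨b, hb⟩ : ∃ b, t < F b := by
    have := htop.eventually (eventually_gt_nhds ht1)
    rcases this.exists with ⟨b, hb⟩
    exact ⟨b, hb⟩
  have hab : a ≤ b := by
    by_contra hc
    push_neg at hc
    exact absurd (monotone_cdf _ hc.le) (by linarith)
  have := intermediate_value_Icc hab ((cdf_cont (map_atomless hZ hZc)).continuousOn)
  rcases this ⟨ha.le, hb.le⟩ with ⟨y, _, hy⟩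
  exact ⟨y, by rw [cdfOf_eq_cdf hZ hZc]; exact hy⟩

lemma map_cdfOf_uniform :
    μ.map (fun ω => cdfOf' μ Z (Z ω)) = volume.restrict (Icc (0:ℝ) 1) := by
  have hm : Measurable fun ω => cdfOf' μ Z (Z ω) := (cdfOf_meas hZ hZc).comp hZ
  haveI : IsProbabilityMeasure (μ.map (fun ω => cdfOf' μ Z (Z ω))) :=
    Measure.isProbabilityMeasure_map hm.aemeasurable
  refine Measure.ext_of_Iic _ _ (fun t => ?_)
  rw [Measure.map_apply hm measurableSet_Iic, Measure.restrict_apply measurableSet_Iic]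
  have hpre : (fun ω => cdfOf' μ Z (Z ω)) ⁻¹' Iic t = {ω | cdfOf' μ Z (Z ω) ≤ t} := rfl
  rcases lt_or_ge t 0 with ht | ht
  · have h1 : (fun ω => cdfOf' μ Z (Z ω)) ⁻¹' Iic t = ∅ := by
      rw [hpre, eq_empty_iff_forall_notMem]
      intro ω hω
      exact absurd (le_trans (cdfOf_nonneg hZ hZc (Z ω)) hω) (not_le.2 ht)
    have h2 : Iic t ∩ Icc (0:ℝ) 1 = ∅ := by
      rw [eq_empty_iff_forall_notMem]
      rintro x ⟨hx1, hx2, _⟩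
      exact absurd (le_trans hx2 hx1) (not_le.2 ht)
    rw [h1, h2]
    simp
  rcases le_or_gt 1 t with ht1 | ht1
  · have h1 : (fun ω => cdfOf' μ Z (Z ω)) ⁻¹' Iic t = univ := by
      rw [hpre, eq_univ_iff_forall]
      exact fun ω => le_trans (cdfOf_le_one hZ hZc (Z ω)) ht1
    have h2 : Iic t ∩ Icc (0:ℝ) 1 = Icc 0 1 := by
      rw [inter_eq_right]
      exact fun x hx => le_trans hx.2 ht1
    rw [h1, h2, measure_univ, Real.volume_Icc]
    norm_num
  · have h2 : Iic t ∩ Icc (0:ℝ) 1 = Icc 0 t := by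
      ext x
      simp only [mem_inter_iff, mem_Iic, mem_Icc]
      constructor
      · rintro ⟨h1, h2, _⟩; exact ⟨h2, h1⟩
      · rintro ⟨h1, h2⟩; exact ⟨h2, h1, le_trans h2 ht1.le⟩
    rw [h2, Real.volume_Icc, hpre]
    rcases eq_or_lt_of_le ht with ht0 | ht0
    · have h1 : {ω | cdfOf' μ Z (Z ω) ≤ t} = {ω | cdfOf' μ Z (Z ω) = t} := by
        ext ω
        simp only [mem_setOf_eq]
        constructor
        · intro h; exact le_antisymm h (ht0 ▸ cdfOf_nonneg hZ hZc (Z ω))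
        · intro h; exact h.le
      rw [h1, level_null hZ hZc]
      rw [← ht0]
      norm_num
    · rcases cdfOf_surj hZ hZc t ht0 ht1 with ⟨y, hy⟩
      have h1 : {ω | cdfOf' μ Z (Z ω) ≤ t} = {ω | cdfOf' μ Z (Z ω) ≤ cdfOf' μ Z y} := by
        rw [hy]
      rw [h1, KL_le hZ hZc, hy]
      norm_num

lemma integral_cdfOf_pow (n : ℕ) :
    ∫ ω, (cdfOf' μ Z (Z ω)) ^ n ∂μ = 1 / (n + 1) := by
  have hm : Measurable fun ω => cdfOf' μ Z (Z ω) := (cdfOf_meas hZ hZc).comp hZ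
  have h1 : ∫ ω, (cdfOf' μ Z (Z ω)) ^ n ∂μ
      = ∫ x, x ^ n ∂(μ.map (fun ω => cdfOf' μ Z (Z ω))) := by
    rw [integral_map hm.aemeasurable]
    exact (measurable_id.pow_const n).aestronglyMeasurable
  rw [h1, map_cdfOf_uniform hZ hZc]
  have : ∫ x in Icc (0:ℝ) 1, x ^ n = ∫ x in (0:ℝ)..1, x ^ n := by
    rw [intervalIntegral.integral_of_le (by norm_num : (0:ℝ) ≤ 1),
      integral_Icc_eq_integral_Ioc]
  rw [this, integral_pow]
  norm_num

lemma integral_cdfOf : ∫ ω, cdfOf' μ Z (Z ω) ∂μ = 1 / 2 := by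
  have := integral_cdfOf_pow hZ hZc 1
  rw [show (((1:ℕ):ℝ) + 1) = 2 by norm_num] at this
  simpa using this

lemma integral_cdfOf_sq : ∫ ω, cdfOf' μ Z (Z ω) * cdfOf' μ Z (Z ω) ∂μ = 1 / 3 := by
  have := integral_cdfOf_pow hZ hZc 2
  rw [show (((2:ℕ) : ℝ) + 1) = 3 by norm_num] at this
  rw [← this]
  congr 1
  ext ω
  ring

end Z

lemma int_bdd {α : Type*} [MeasurableSpace α] {P : Measure α} [IsFiniteMeasure P]
    {φ : α → ℝ} (hm : Measurable φ) {C : ℝ} (hb : ∀ a, |φ a| ≤ C) : Integrable φ P :=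
  (integrable_const C).mono' hm.aestronglyMeasurable
    (Eventually.of_forall (by simpa [Real.norm_eq_abs] using hb))

lemma integral_ind {α : Type*} [MeasurableSpace α] (P : Measure α) [IsFiniteMeasure P]
    {q : α → Prop} [DecidablePred q] (hs : MeasurableSet {a | q a}) :
    ∫ a, (if q a then (1:ℝ) else 0) ∂P = (P {a | q a}).toReal := by
  have h := integral_indicator_const (1:ℝ) hs (μ := P)
  simp only [Set.indicator_apply, mem_setOf_eq, smul_eq_mul, mul_one] at h
  exact h

section XY

variable {Ω : Type*} [MeasurableSpace Ω] {μ : Measure Ω} [IsProbabilityMeasure μ]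
  {X Y : Ω → ℝ}

/-- grade of `Y`: `G(Y ω)`. -/
def gr (μ : Measure Ω) (Y : Ω → ℝ) (ω : Ω) : ℝ := cdfOf' μ Y (Y ω)

variable (hY : Measurable Y) (hYc : ∀ z : ℝ, μ {ω | Y ω = z} = 0)
include hY hYc

lemma gr_meas : Measurable (gr μ Y) := (cdfOf_meas hY hYc).comp hY

lemma gr_nonneg (ω : Ω) : 0 ≤ gr μ Y ω := cdfOf_nonneg hY hYc _

lemma gr_le_one (ω : Ω) : gr μ Y ω ≤ 1 := cdfOf_le_one hY hYc _

lemma T1 : ∫ p : Ω × Ω, gr μ Y p.2 * (if gr μ Y p.1 < gr μ Y p.2 then (1:ℝ) else 0)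
    ∂(μ.prod μ) = 1 / 3 := by
  have mg := gr_meas hY hYc (μ := μ)
  have hmeas : Measurable fun p : Ω × Ω =>
      gr μ Y p.2 * (if gr μ Y p.1 < gr μ Y p.2 then (1:ℝ) else 0) :=
    (mg.comp measurable_snd).mul
      (Measurable.ite (measurableSet_lt (mg.comp measurable_fst) (mg.comp measurable_snd))
        measurable_const measurable_const)
  have hint : Integrable (fun p : Ω × Ω =>
      gr μ Y p.2 * (if gr μ Y p.1 < gr μ Y p.2 then (1:ℝ) else 0)) (μ.prod μ) := by
    refine int_bdd hmeas (C := 1) fun p => ?_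
    have h1 := gr_nonneg hY hYc (μ := μ) p.2
    have h2 := gr_le_one hY hYc (μ := μ) p.2
    split_ifs <;> simp [abs_le] <;> constructor <;> linarith
  rw [integral_prod_symm _ hint]
  have hinner : ∀ y : Ω, ∫ x, gr μ Y y * (if gr μ Y x < gr μ Y y then (1:ℝ) else 0) ∂μ
      = gr μ Y y * gr μ Y y := by
    intro y
    rw [integral_const_mul, integral_ind μ (measurableSet_lt mg measurable_const)]
    congr 1
    have := KL_lt hY hYc (Y y)
    rw [show {a | gr μ Y a < gr μ Y y} = {ω | cdfOf' μ Y (Y ω) < cdfOf' μ Y (Y y)} from rfl,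
      this]
    exact ENNReal.toReal_ofReal (gr_nonneg hY hYc y)
  simp_rw [hinner]
  exact integral_cdfOf_sq hY hYc

lemma T2 : ∫ p : Ω × Ω, gr μ Y p.1 * (if gr μ Y p.1 < gr μ Y p.2 then (1:ℝ) else 0)
    ∂(μ.prod μ) = 1 / 6 := by
  have mg := gr_meas hY hYc (μ := μ)
  have hmeas : Measurable fun p : Ω × Ω =>
      gr μ Y p.1 * (if gr μ Y p.1 < gr μ Y p.2 then (1:ℝ) else 0) :=
    (mg.comp measurable_fst).mul
      (Measurable.ite (measurableSet_lt (mg.comp measurable_fst) (mg.comp measurable_snd))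
        measurable_const measurable_const)
  have hint : Integrable (fun p : Ω × Ω =>
      gr μ Y p.1 * (if gr μ Y p.1 < gr μ Y p.2 then (1:ℝ) else 0)) (μ.prod μ) := by
    refine int_bdd hmeas (C := 1) fun p => ?_
    have h1 := gr_nonneg hY hYc (μ := μ) p.1
    have h2 := gr_le_one hY hYc (μ := μ) p.1
    split_ifs <;> simp [abs_le] <;> constructor <;> linarith
  rw [integral_prod _ hint]
  have hinner : ∀ x : Ω, ∫ y, gr μ Y x * (if gr μ Y x < gr μ Y y then (1:ℝ) else 0) ∂μ
      = gr μ Y x * (1 - gr μ Y x) := by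
    intro x
    rw [integral_const_mul, integral_ind μ (measurableSet_lt measurable_const mg)]
    congr 1
    have hcompl : {a | gr μ Y x < gr μ Y a} = {a | gr μ Y a ≤ gr μ Y x}ᶜ := by
      ext a; simp [not_le]
    rw [hcompl, measure_compl (measurableSet_le mg measurable_const) (measure_ne_top μ _),
      show {a | gr μ Y a ≤ gr μ Y x} = {ω | cdfOf' μ Y (Y ω) ≤ cdfOf' μ Y (Y x)} from rfl,
      KL_le hY hYc (Y x), measure_univ]
    rw [ENNReal.toReal_sub_of_le (ENNReal.ofReal_le_one.2 (cdfOf_le_one hY hYc (Y x)))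
      ENNReal.one_ne_top, ENNReal.toReal_one, ENNReal.toReal_ofReal (cdfOf_nonneg hY hYc (Y x))]
    rfl
  simp_rw [hinner, mul_sub, mul_one]
  rw [integral_sub (int_bdd mg (C := 1) fun a => ?_)
      (int_bdd (φ := fun a => gr μ Y a * gr μ Y a) (mg.mul mg) (C := 1) fun a => ?_)]
  · have e1 : ∫ a, gr μ Y a ∂μ = 1 / 2 := integral_cdfOf hY hYc
    have e2 : ∫ a, gr μ Y a * gr μ Y a ∂μ = 1 / 3 := integral_cdfOf_sq hY hYc
    rw [e1, e2]; norm_num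
  · have h1 := gr_nonneg hY hYc (μ := μ) a
    have h2 := gr_le_one hY hYc (μ := μ) a
    rw [abs_le]; constructor <;> linarith
  · have h1 := gr_nonneg hY hYc (μ := μ) a
    have h2 := gr_le_one hY hYc (μ := μ) a
    rw [abs_le]; constructor <;> nlinarith

variable (hX : Measurable X) (hXc : ∀ z : ℝ, μ {ω | X ω = z} = 0)
include hX hXc

lemma T3 : ∫ p : Ω × Ω, gr μ Y p.2 * (if X p.1 < X p.2 then (1:ℝ) else 0)
    ∂(μ.prod μ) = ∫ ω, gr μ Y ω * gr μ X ω ∂μ := by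
  have mg := gr_meas hY hYc (μ := μ)
  have hmeas : Measurable fun p : Ω × Ω =>
      gr μ Y p.2 * (if X p.1 < X p.2 then (1:ℝ) else 0) :=
    (mg.comp measurable_snd).mul
      (Measurable.ite (measurableSet_lt (hX.comp measurable_fst) (hX.comp measurable_snd))
        measurable_const measurable_const)
  have hint : Integrable (fun p : Ω × Ω =>
      gr μ Y p.2 * (if X p.1 < X p.2 then (1:ℝ) else 0)) (μ.prod μ) := by
    refine int_bdd hmeas (C := 1) fun p => ?_
    have h1 := gr_nonneg hY hYc (μ := μ) p.2
    have h2 := gr_le_one hY hYc (μ := μ) p.2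
    split_ifs <;> rw [abs_le] <;> constructor <;> linarith
  rw [integral_prod_symm _ hint]
  have hinner : ∀ y : Ω, ∫ x, gr μ Y y * (if X x < X y then (1:ℝ) else 0) ∂μ
      = gr μ Y y * gr μ X y := by
    intro y
    rw [integral_const_mul, integral_ind μ (measurableSet_lt hX measurable_const)]
    rw [show {a | X a < X y} = {ω | X ω < X y} from rfl, measure_lt_eq hX hXc (X y),
      ENNReal.toReal_ofReal (cdfOf_nonneg hX hXc (X y))]
    rfl
  simp_rw [hinner]

lemma T4 : ∫ p : Ω × Ω, gr μ Y p.1 * (if X p.1 < X p.2 then (1:ℝ) else 0)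
    ∂(μ.prod μ) = 1 / 2 - ∫ ω, gr μ Y ω * gr μ X ω ∂μ := by
  have mg := gr_meas hY hYc (μ := μ)
  have mf := gr_meas hX hXc (μ := μ)
  have hmeas : Measurable fun p : Ω × Ω =>
      gr μ Y p.1 * (if X p.1 < X p.2 then (1:ℝ) else 0) :=
    (mg.comp measurable_fst).mul
      (Measurable.ite (measurableSet_lt (hX.comp measurable_fst) (hX.comp measurable_snd))
        measurable_const measurable_const)
  have hint : Integrable (fun p : Ω × Ω =>
      gr μ Y p.1 * (if X p.1 < X p.2 then (1:ℝ) else 0)) (μ.prod μ) := by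
    refine int_bdd hmeas (C := 1) fun p => ?_
    have h1 := gr_nonneg hY hYc (μ := μ) p.1
    have h2 := gr_le_one hY hYc (μ := μ) p.1
    split_ifs <;> rw [abs_le] <;> constructor <;> linarith
  rw [integral_prod _ hint]
  have hinner : ∀ x : Ω, ∫ y, gr μ Y x * (if X x < X y then (1:ℝ) else 0) ∂μ
      = gr μ Y x * (1 - gr μ X x) := by
    intro x
    rw [integral_const_mul, integral_ind μ (measurableSet_lt measurable_const hX)]
    congr 1
    have hcompl : {a | X x < X a} = {ω | X ω ≤ X x}ᶜ := by
      ext a; simp [not_le]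
    rw [hcompl, measure_compl (measurableSet_le hX measurable_const) (measure_ne_top μ _),
      measure_le_eq hX hXc (X x), measure_univ,
      ENNReal.toReal_sub_of_le (ENNReal.ofReal_le_one.2 (cdfOf_le_one hX hXc (X x)))
        ENNReal.one_ne_top, ENNReal.toReal_one, ENNReal.toReal_ofReal (cdfOf_nonneg hX hXc (X x))]
    rfl
  simp_rw [hinner, mul_sub, mul_one]
  rw [integral_sub (int_bdd mg (C := 1) fun a => ?_)
      (int_bdd (φ := fun a => gr μ Y a * gr μ X a) (mg.mul mf) (C := 1) fun a => ?_)]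
  · have e1 : ∫ a, gr μ Y a ∂μ = 1 / 2 := integral_cdfOf hY hYc
    rw [e1]
  · have h1 := gr_nonneg hY hYc (μ := μ) a
    have h2 := gr_le_one hY hYc (μ := μ) a
    rw [abs_le]; constructor <;> linarith
  · have h1 := gr_nonneg hY hYc (μ := μ) a
    have h2 := gr_le_one hY hYc (μ := μ) a
    have h3 := gr_nonneg hX hXc (μ := μ) a
    have h4 := gr_le_one hX hXc (μ := μ) a
    rw [abs_le]; constructor <;> nlinarith

omit hY hYc in
lemma diag_null : (μ.prod μ) {p : Ω × Ω | X p.1 = X p.2} = 0 := by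
  have hs : MeasurableSet {p : Ω × Ω | X p.1 = X p.2} :=
    measurableSet_eq_fun (hX.comp measurable_fst) (hX.comp measurable_snd)
  rw [Measure.prod_apply hs]
  have hz : ∀ x : Ω, μ (Prod.mk x ⁻¹' {p : Ω × Ω | X p.1 = X p.2}) = 0 := by
    intro x
    have : Prod.mk x ⁻¹' {p : Ω × Ω | X p.1 = X p.2} = {ω | X ω = X x} := by
      ext ω; simp [eq_comm]
    rw [this]; exact hXc (X x)
  simp only [hz, lintegral_zero]

/-- The main integral identity. -/
lemma main_I :
    ∫ p : Ω × Ω, (gr μ Y p.2 - gr μ Y p.1) * (if Y p.1 < Y p.2 then (1:ℝ) else 0) *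
      (if X p.1 < X p.2 then (1:ℝ) else 0) ∂(μ.prod μ)
    = ∫ ω, gr μ Y ω * gr μ X ω ∂μ - 1 / 6 := by
  have mg := gr_meas hY hYc (μ := μ)
  set h : Ω × Ω → ℝ :=
    fun p => (gr μ Y p.2 - gr μ Y p.1) * (if Y p.1 < Y p.2 then (1:ℝ) else 0) with hh
  have mh : Measurable h :=
    ((mg.comp measurable_snd).sub (mg.comp measurable_fst)).mul
      (Measurable.ite (measurableSet_lt (hY.comp measurable_fst) (hY.comp measurable_snd))
        measurable_const measurable_const)
  have hb : ∀ p, |h p| ≤ 1 := by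
    intro p
    have h1 := gr_nonneg hY hYc (μ := μ) p.1
    have h2 := gr_le_one hY hYc (μ := μ) p.1
    have h3 := gr_nonneg hY hYc (μ := μ) p.2
    have h4 := gr_le_one hY hYc (μ := μ) p.2
    rw [hh]; dsimp only
    split_ifs <;> rw [abs_le] <;> constructor <;> linarith
  have mindX : Measurable fun p : Ω × Ω => (if X p.1 < X p.2 then (1:ℝ) else 0) :=
    Measurable.ite (measurableSet_lt (hX.comp measurable_fst) (hX.comp measurable_snd))
      measurable_const measurable_const
  have mindX' : Measurable fun p : Ω × Ω => (if X p.2 < X p.1 then (1:ℝ) else 0) :=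
    Measurable.ite (measurableSet_lt (hX.comp measurable_snd) (hX.comp measurable_fst))
      measurable_const measurable_const
  have bnd01 : ∀ (c : Prop) [Decidable c], |if c then (1:ℝ) else 0| ≤ 1 := by
    intro c _; split_ifs <;> simp
  have hI_int : Integrable (fun p => h p * (if X p.1 < X p.2 then (1:ℝ) else 0)) (μ.prod μ) :=
    int_bdd (mh.mul mindX) (C := 1) fun p => by
      calc |h p * _| = |h p| * |_| := abs_mul _ _
        _ ≤ 1 * 1 := mul_le_mul (hb p) (bnd01 _) (abs_nonneg _) zero_le_one
        _ = 1 := mul_one 1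
  have hJ_int : Integrable (fun p => h p * (if X p.2 < X p.1 then (1:ℝ) else 0)) (μ.prod μ) :=
    int_bdd (mh.mul mindX') (C := 1) fun p => by
      calc |h p * _| = |h p| * |_| := abs_mul _ _
        _ ≤ 1 * 1 := mul_le_mul (hb p) (bnd01 _) (abs_nonneg _) zero_le_one
        _ = 1 := mul_one 1
  have hh_int : Integrable h (μ.prod μ) := int_bdd mh hb
  set I := ∫ p, h p * (if X p.1 < X p.2 then (1:ℝ) else 0) ∂(μ.prod μ) with hI
  set J := ∫ p, h p * (if X p.2 < X p.1 then (1:ℝ) else 0) ∂(μ.prod μ) with hJ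
  -- Step 1: ∫ h = 1/6
  have hint_h : ∫ p, h p ∂(μ.prod μ) = 1 / 6 := by
    have hpt : ∀ p : Ω × Ω, h p = gr μ Y p.2 * (if gr μ Y p.1 < gr μ Y p.2 then (1:ℝ) else 0)
        - gr μ Y p.1 * (if gr μ Y p.1 < gr μ Y p.2 then (1:ℝ) else 0) := by
      intro p
      rw [hh]; dsimp only
      rcases lt_trichotomy (Y p.1) (Y p.2) with hlt | heq | hgt
      · rw [if_pos hlt]
        by_cases hg : gr μ Y p.1 < gr μ Y p.2
        · rw [if_pos hg]; ring
        · have : gr μ Y p.1 = gr μ Y p.2 :=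
            le_antisymm (cdfOf_mono hY hYc hlt.le) (not_lt.1 hg)
          rw [if_neg hg, this]; ring
      · have : gr μ Y p.1 = gr μ Y p.2 := by rw [gr, gr, heq]
        rw [this, if_neg (lt_irrefl _)]; ring
      · have hge : gr μ Y p.2 ≤ gr μ Y p.1 := cdfOf_mono hY hYc hgt.le
        rw [if_neg (not_lt.2 hgt.le), if_neg (not_lt.2 hge)]; ring
    rw [integral_congr_ae (Eventually.of_forall hpt)]
    have mi : Measurable fun p : Ω × Ω => (if gr μ Y p.1 < gr μ Y p.2 then (1:ℝ) else 0) :=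
      Measurable.ite (measurableSet_lt (mg.comp measurable_fst) (mg.comp measurable_snd))
        measurable_const measurable_const
    rw [integral_sub]
    · rw [T1 hY hYc, T2 hY hYc]; norm_num
    · refine int_bdd ((mg.comp measurable_snd).mul mi) (C := 1) fun p => ?_
      have h3 := gr_nonneg hY hYc (μ := μ) p.2
      have h4 := gr_le_one hY hYc (μ := μ) p.2
      split_ifs <;> rw [abs_le] <;> constructor <;> linarith
    · refine int_bdd ((mg.comp measurable_fst).mul mi) (C := 1) fun p => ?_
      have h3 := gr_nonneg hY hYc (μ := μ) p.1
      have h4 := gr_le_one hY hYc (μ := μ) p.1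
      split_ifs <;> rw [abs_le] <;> constructor <;> linarith
  -- Step 2: I + J = 1/6
  have hsum : I + J = 1 / 6 := by
    rw [hI, hJ, ← integral_add hI_int hJ_int]
    have hae : (fun p => h p * (if X p.1 < X p.2 then (1:ℝ) else 0)
        + h p * (if X p.2 < X p.1 then (1:ℝ) else 0)) =ᵐ[μ.prod μ] h := by
      have hss : {p : Ω × Ω | ¬(h p * (if X p.1 < X p.2 then (1:ℝ) else 0)
          + h p * (if X p.2 < X p.1 then (1:ℝ) else 0) = h p)} ⊆ {p | X p.1 = X p.2} := by
        intro p hp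
        simp only [mem_setOf_eq] at hp ⊢
        by_contra hne
        rcases lt_or_gt_of_ne hne with hlt | hgt
        · exact hp (by rw [if_pos hlt, if_neg (not_lt.2 hlt.le)]; ring)
        · exact hp (by rw [if_neg (not_lt.2 hgt.le), if_pos hgt]; ring)
      exact measure_mono_null hss (diag_null hX hXc)
    rw [integral_congr_ae hae, hint_h]
  -- Step 3: I - J = 2 * E[fg] - 1/2
  have hdiff : I - J = 2 * (∫ ω, gr μ Y ω * gr μ X ω ∂μ) - 1 / 2 := by
    have hJswap : J = ∫ p : Ω × Ω, h (Prod.swap p) * (if X p.1 < X p.2 then (1:ℝ) else 0)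
        ∂(μ.prod μ) := by
      rw [hJ]
      have := integral_prod_swap (μ := μ) (ν := μ)
        (fun p : Ω × Ω => h p * (if X p.2 < X p.1 then (1:ℝ) else 0))
      rw [← this]
      rfl
    have mhswap : Measurable fun p : Ω × Ω => h (Prod.swap p) := mh.comp measurable_swap
    have hswap_int : Integrable (fun p : Ω × Ω => h (Prod.swap p)
        * (if X p.1 < X p.2 then (1:ℝ) else 0)) (μ.prod μ) :=
      int_bdd (mhswap.mul mindX) (C := 1) fun p => by
        calc |h (Prod.swap p) * _| = |h (Prod.swap p)| * |_| := abs_mul _ _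
          _ ≤ 1 * 1 := mul_le_mul (hb _) (bnd01 _) (abs_nonneg _) zero_le_one
          _ = 1 := mul_one 1
    rw [hI, hJswap, ← integral_sub hI_int hswap_int]
    have hpt2 : ∀ p : Ω × Ω, h p * (if X p.1 < X p.2 then (1:ℝ) else 0)
        - h (Prod.swap p) * (if X p.1 < X p.2 then (1:ℝ) else 0)
        = gr μ Y p.2 * (if X p.1 < X p.2 then (1:ℝ) else 0)
          - gr μ Y p.1 * (if X p.1 < X p.2 then (1:ℝ) else 0) := by
      intro p
      have key : h p - h (Prod.swap p) = gr μ Y p.2 - gr μ Y p.1 := by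
        rw [hh]; dsimp only [Prod.swap, Prod.fst, Prod.snd]
        rcases lt_trichotomy (Y p.1) (Y p.2) with hlt | heq | hgt
        · rw [if_pos hlt, if_neg (not_lt.2 hlt.le)]; ring
        · have : gr μ Y p.1 = gr μ Y p.2 := by rw [gr, gr, heq]
          rw [heq, if_neg (lt_irrefl _), this]; ring
        · rw [if_neg (not_lt.2 hgt.le), if_pos hgt]; ring
      have expand : h p * (if X p.1 < X p.2 then (1:ℝ) else 0)
          - h (Prod.swap p) * (if X p.1 < X p.2 then (1:ℝ) else 0)
          = (h p - h (Prod.swap p)) * (if X p.1 < X p.2 then (1:ℝ) else 0) := by ring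
      rw [expand, key]
      ring
    rw [integral_congr_ae (Eventually.of_forall hpt2), integral_sub]
    · rw [T3 hY hYc hX hXc, T4 hY hYc hX hXc]; ring
    · refine int_bdd ((mg.comp measurable_snd).mul mindX) (C := 1) fun p => ?_
      have h3 := gr_nonneg hY hYc (μ := μ) p.2
      have h4 := gr_le_one hY hYc (μ := μ) p.2
      split_ifs <;> rw [abs_le] <;> constructor <;> linarith
    · refine int_bdd ((mg.comp measurable_fst).mul mindX) (C := 1) fun p => ?_
      have h3 := gr_nonneg hY hYc (μ := μ) p.1
      have h4 := gr_le_one hY hYc (μ := μ) p.1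
      split_ifs <;> rw [abs_le] <;> constructor <;> linarith
  -- combine
  linarith

end XY

section Final

variable {Ω : Type*} [MeasurableSpace Ω]

def mdf0 (μ : Measure Ω) (X : Ω → ℝ) (x : ℝ) : ℝ :=
  (μ {ω | X ω < x}).toReal + (1 / 2) * (μ {ω | X ω = x}).toReal

def covar0 (μ : Measure Ω) (f g : Ω → ℝ) : ℝ :=
  (∫ ω, f ω * g ω ∂μ) - (∫ ω, f ω ∂μ) * (∫ ω, g ω ∂μ)

def agc0 (μ : Measure Ω) (U V : Ω → ℝ) : ℝ :=
  covar0 μ (fun ω => mdf0 μ U (U ω)) (fun ω => mdf0 μ V (V ω)) /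
    covar0 μ (fun ω => mdf0 μ V (V ω)) (fun ω => mdf0 μ V (V ω))

def cma0 (μ : Measure Ω) (U V : Ω → ℝ) : ℝ := (agc0 μ U V + 1) / 2

theorem stmt_7' (μ : Measure Ω) [IsProbabilityMeasure μ] (X Y : Ω → ℝ)
    (hX : Measurable X) (hY : Measurable Y)
    (hXc : ∀ x : ℝ, μ {ω | X ω = x} = 0) (hYc : ∀ y : ℝ, μ {ω | Y ω = y} = 0) :
    cma0 μ X Y =
      6 * (∫ p, (cdfOf' μ Y (Y p.2) - cdfOf' μ Y (Y p.1)) *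
        (if Y p.1 < Y p.2 then (1 : ℝ) else 0) * (if X p.1 < X p.2 then (1 : ℝ) else 0)
        ∂(μ.prod μ))
    ∧ cma0 μ X Y = cma0 μ Y X
    ∧ 2 * cma0 μ X Y - 1 =
        12 * covar0 μ (fun ω => cdfOf' μ X (X ω)) (fun ω => cdfOf' μ Y (Y ω)) := by
  have hEX : ∫ ω, cdfOf' μ X (X ω) ∂μ = 1 / 2 := integral_cdfOf hX hXc
  have hEY : ∫ ω, cdfOf' μ Y (Y ω) ∂μ = 1 / 2 := integral_cdfOf hY hYc
  have hEXX : ∫ ω, cdfOf' μ X (X ω) * cdfOf' μ X (X ω) ∂μ = 1 / 3 := integral_cdfOf_sq hX hXc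
  have hEYY : ∫ ω, cdfOf' μ Y (Y ω) * cdfOf' μ Y (Y ω) ∂μ = 1 / 3 := integral_cdfOf_sq hY hYc
  set E := ∫ ω, cdfOf' μ X (X ω) * cdfOf' μ Y (Y ω) ∂μ with hE
  have hcomm : ∫ ω, cdfOf' μ Y (Y ω) * cdfOf' μ X (X ω) ∂μ = E := by
    rw [hE]
    exact integral_congr_ae (Eventually.of_forall fun ω => mul_comm _ _)
  have h0 : ∫ p : Ω × Ω, (cdfOf' μ Y (Y p.2) - cdfOf' μ Y (Y p.1)) *
      (if Y p.1 < Y p.2 then (1 : ℝ) else 0) * (if X p.1 < X p.2 then (1 : ℝ) else 0)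
      ∂(μ.prod μ) = ∫ ω, cdfOf' μ Y (Y ω) * cdfOf' μ X (X ω) ∂μ - 1 / 6 :=
    main_I hY hYc hX hXc
  have hI : ∫ p : Ω × Ω, (cdfOf' μ Y (Y p.2) - cdfOf' μ Y (Y p.1)) *
      (if Y p.1 < Y p.2 then (1 : ℝ) else 0) * (if X p.1 < X p.2 then (1 : ℝ) else 0)
      ∂(μ.prod μ) = E - 1 / 6 := by
    rw [h0, hcomm]
  have hmdfX : ∀ x : ℝ, mdf0 μ X x = cdfOf' μ X x := by
    intro x
    rw [mdf0, hXc x, measure_lt_eq hX hXc x,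
      ENNReal.toReal_ofReal (cdfOf_nonneg hX hXc x)]
    simp
  have hmdfY : ∀ y : ℝ, mdf0 μ Y y = cdfOf' μ Y y := by
    intro y
    rw [mdf0, hYc y, measure_lt_eq hY hYc y,
      ENNReal.toReal_ofReal (cdfOf_nonneg hY hYc y)]
    simp
  refine ⟨?_, ?_, ?_⟩
  · simp only [cma0, agc0, covar0, hmdfX, hmdfY]
    rw [hI, hEX, hEY, hEYY, ← hE]
    ring
  · simp only [cma0, agc0, covar0, hmdfX, hmdfY]
    rw [hEX, hEY, hEYY, hEXX, hcomm, ← hE]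
  · simp only [cma0, agc0, covar0, hmdfX, hmdfY]
    rw [hEX, hEY, hEYY, ← hE]
    ring

end Final

end Stmt7Aux

/-- for atomless (continuous) `X` and `Y`,
`CMA(X,Y) = 6 E[(G(Y'') − G(Y')) 1{Y' < Y''} 1{X' < X''}]`, `CMA(X,Y) = CMA(Y,X)`, and
`2 CMA(X,Y) − 1 = 12 Cov(F(X), G(Y))` (Spearman's rho). -/
theorem stmt_7 (μ : Measure Ω) [IsProbabilityMeasure μ] (X Y : Ω → ℝ)
    (hX : Measurable X) (hY : Measurable Y)
    (hXc : ∀ x : ℝ, μ {ω | X ω = x} = 0) (hYc : ∀ y : ℝ, μ {ω | Y ω = y} = 0)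
    (hXnd : Nondeg μ X) (hYnd : Nondeg μ Y) :
    cma μ X Y =
      6 * (∫ p, (cdfOf μ Y (Y p.2) - cdfOf μ Y (Y p.1)) *
        (if Y p.1 < Y p.2 then (1 : ℝ) else 0) * (if X p.1 < X p.2 then (1 : ℝ) else 0)
        ∂(μ.prod μ))
    ∧ cma μ X Y = cma μ Y X
    ∧ 2 * cma μ X Y - 1 =
        12 * covar μ (fun ω => cdfOf μ X (X ω)) (fun ω => cdfOf μ Y (Y ω)) := by
  exact Stmt7Aux.stmt_7' μ X Y hX hY hXc hYc

end
end
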